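/- Let H be a Poisson superalgebra and P₁ a Poisson superalgebra with Kantor double J₁ = Kan(P₁). Then there is a vector space isomorphism Kan(H ⊗ P₁) ≅ H ⊗ J₁ under which the Kantor product takes the form (x⊗f)•(y⊗g) = (-1)^{|f||y|}( x·y ⊗ f∘g + (-1)^{|f|+1} {x,y} ⊗ D(f)∘D(g) ), where ∘ is the Jordan product of J₁ and D is the canonical odd superderivation of J₁. -/

import Mathlib

noncomputable section

/-- The sign `(-1)^i` for `i : ZMod 2`. -/
def sgn (K : Type) [Field K] (i : ZMod 2) : K := if i = 0 then 1 else -1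

variable (K : Type) [Field K]

variable {V : Type} [AddCommGroup V] [Module K V]

/-- The linear span of all products `μ a b` with `a ∈ S`, `b ∈ T`. -/
def mulSpan (μ : V →ₗ[K] V →ₗ[K] V) (S T : Submodule K V) : Submodule K V :=
  Submodule.span K {w | ∃ a ∈ S, ∃ b ∈ T, w = μ a b}

/-- A two-sided ideal of a (nonassociative) algebra with product `μ`. -/
def IsIdeal (μ : V →ₗ[K] V →ₗ[K] V) (I : Submodule K V) : Prop :=
  ∀ a : V, ∀ b ∈ I, μ a b ∈ I ∧ μ b a ∈ I

/-- The product respects the `ZMod 2`-grading. -/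
def GradedMul (g : ZMod 2 → Submodule K V) (μ : V →ₗ[K] V →ₗ[K] V) : Prop :=
  ∀ i j : ZMod 2, ∀ a ∈ g i, ∀ b ∈ g j, μ a b ∈ g (i + j)

/-- Supercommutativity: `a b = (-1)^{|a||b|} b a` on homogeneous elements. -/
def SuperComm (g : ZMod 2 → Submodule K V) (μ : V →ₗ[K] V →ₗ[K] V) : Prop :=
  ∀ i j : ZMod 2, ∀ a ∈ g i, ∀ b ∈ g j, μ a b = sgn K (i * j) • μ b a

/-- The linearized super Jordan identity on homogeneous elements. -/
def SuperJordan (g : ZMod 2 → Submodule K V) (μ : V →ₗ[K] V →ₗ[K] V) : Prop :=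
  ∀ ia ib ic id : ZMod 2, ∀ a ∈ g ia, ∀ b ∈ g ib, ∀ c ∈ g ic, ∀ d ∈ g id,
    μ (μ a b) (μ c d) + sgn K (ib * ic) • μ (μ a c) (μ b d)
        + sgn K ((ib + ic) * id) • μ (μ a d) (μ b c)
      = μ (μ (μ a b) c) d + sgn K (ib * (ic + id) + ic * id) • μ (μ (μ a d) c) b
        + sgn K (ia * (ib + ic + id) + ic * id) • μ (μ (μ b d) c) a

/-- A `ZMod 2`-graded algebra which is a Jordan superalgebra. -/
structure IsJordanSuper (g : ZMod 2 → Submodule K V) (μ : V →ₗ[K] V →ₗ[K] V) : Prop where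
  internal : DirectSum.IsInternal g
  graded : GradedMul K g μ
  comm : SuperComm K g μ
  jordan : SuperJordan K g μ

/-- A `ZMod 2`-graded algebra which is a Lie superalgebra. -/
structure IsLieSuper (g : ZMod 2 → Submodule K V) (br : V →ₗ[K] V →ₗ[K] V) : Prop where
  internal : DirectSum.IsInternal g
  graded : GradedMul K g br
  anti : ∀ i j : ZMod 2, ∀ x ∈ g i, ∀ y ∈ g j, br x y = -(sgn K (i * j)) • br y x
  jacobi : ∀ i j k : ZMod 2, ∀ x ∈ g i, ∀ y ∈ g j, ∀ z ∈ g k,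
    br x (br y z) = br (br x y) z + sgn K (i * j) • br y (br x z)

/-- A Poisson superalgebra structure: a supercommutative associative unital product `m`
and a super Lie bracket `p` related by the super Leibniz rule. -/
structure IsPoissonSuper (g : ZMod 2 → Submodule K V)
    (m p : V →ₗ[K] V →ₗ[K] V) (e : V) : Prop where
  internal : DirectSum.IsInternal g
  m_graded : GradedMul K g m
  assoc : ∀ a b c : V, m (m a b) c = m a (m b c)
  e_mem : e ∈ g 0
  one_mul : ∀ a : V, m e a = a
  mul_one : ∀ a : V, m a e = a
  comm : SuperComm K g m
  p_graded : GradedMul K g p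
  anti : ∀ i j : ZMod 2, ∀ x ∈ g i, ∀ y ∈ g j, p x y = -(sgn K (i * j)) • p y x
  jacobi : ∀ i j k : ZMod 2, ∀ x ∈ g i, ∀ y ∈ g j, ∀ z ∈ g k,
    p x (p y z) = p (p x y) z + sgn K (i * j) • p y (p x z)
  leibniz : ∀ j k : ZMod 2, ∀ a : V, ∀ b ∈ g j, ∀ c ∈ g k,
    p (m a b) c = m a (p b c) + sgn K (j * k) • m (p a c) b

/-- The `ZMod 2`-grading of the Kantor double `A ⊕ Ā`: the degree-`i` part is
`A_i ⊕ (Ā)_i` where `(Ā)_i = A_{i+1}` (i.e. `|ā| = 1 - |a|`). -/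
def kanGrading (g : ZMod 2 → Submodule K V) : ZMod 2 → Submodule K (V × V) :=
  fun i => (g i).prod (g (i + 1))

/-- The defining multiplication rules of the Kantor double `Kan(A) = A ⊕ Ā` of a
Poisson superalgebra `(A, m, p)`: `a•b = ab`, `a•b̄ = (ab)‾`, `ā•b = (-1)^{|b|}(ab)‾`,
`ā•b̄ = (-1)^{|b|}{a,b}`; an element `(a, b) : V × V` represents `a + b̄`. -/
structure KantorRules (g : ZMod 2 → Submodule K V) (m p : V →ₗ[K] V →ₗ[K] V)
    (μ : V × V →ₗ[K] V × V →ₗ[K] V × V) : Prop where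
  plain_plain : ∀ a b : V, μ (a, 0) (b, 0) = (m a b, 0)
  plain_bar : ∀ a b : V, μ (a, 0) (0, b) = (0, m a b)
  bar_plain : ∀ a : V, ∀ j : ZMod 2, ∀ b ∈ g j, μ (0, a) (b, 0) = (0, sgn K j • m a b)
  bar_bar : ∀ a : V, ∀ j : ZMod 2, ∀ b ∈ g j, μ (0, a) (0, b) = (sgn K j • p a b, 0)

/-- The unit `1` of the Jordan double `Jor(L) = ⟨1⟩ ⊕ L ⊕ ⟨1̄⟩ ⊕ L̄`; an element
`((α, x), (β, y))` of the carrier `(K × V) × (K × V)` represents `α1 + x + β1̄ + ȳ`. -/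
def jOne (V : Type) [AddCommGroup V] [Module K V] : (K × V) × (K × V) := ((1, 0), (0, 0))

/-- The odd element `1̄` of the Jordan double `Jor(L)`. -/
def jBarOne (V : Type) [AddCommGroup V] [Module K V] : (K × V) × (K × V) := ((0, 0), (1, 0))

/-- The embedding `L → Jor(L)`, `x ↦ x`. -/
def inclL (V : Type) [AddCommGroup V] [Module K V] : V →ₗ[K] (K × V) × (K × V) :=
  (LinearMap.inl K (K × V) (K × V)).comp (LinearMap.inr K K V)

/-- The embedding `L → Jor(L)`, `x ↦ x̄`. -/
def inclLBar (V : Type) [AddCommGroup V] [Module K V] : V →ₗ[K] (K × V) × (K × V) :=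
  (LinearMap.inr K (K × V) (K × V)).comp (LinearMap.inr K K V)

/-- The `ZMod 2`-grading of `Jor(L)`: even part `⟨1⟩ ⊕ L₀ ⊕ L̄₁`, odd part `L₁ ⊕ ⟨1̄⟩ ⊕ L̄₀`
(recall `|x̄| = 1 - |x|` and `1̄` is odd). -/
def jorGrading (g : ZMod 2 → Submodule K V) : ZMod 2 → Submodule K ((K × V) × (K × V)) :=
  fun i =>
    ((if i = 0 then (⊤ : Submodule K K) else ⊥).prod (g i)).prod
      ((if i = 0 then (⊥ : Submodule K K) else ⊤).prod (g (i + 1)))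

/-- The defining multiplication rules of the Jordan double `Jor(L)` of a Lie
superalgebra `(L, [,])`: `1` is the unit, `x̄ • ȳ = [x,y]`, `x • 1̄ = x̄`,
`1̄ • x = (-1)^{|x|} x̄`, and all other products of `1, L, 1̄, L̄` vanish. -/
structure JorRules (g : ZMod 2 → Submodule K V) (br : V →ₗ[K] V →ₗ[K] V)
    (μ : (K × V) × (K × V) →ₗ[K] (K × V) × (K × V) →ₗ[K] (K × V) × (K × V)) : Prop where
  one_mul : ∀ w, μ (jOne K V) w = w
  mul_one : ∀ w, μ w (jOne K V) = w
  l_l : ∀ x y : V, μ (inclL K V x) (inclL K V y) = 0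
  l_lbar : ∀ x y : V, μ (inclL K V x) (inclLBar K V y) = 0
  lbar_l : ∀ x y : V, μ (inclLBar K V x) (inclL K V y) = 0
  lbar_lbar : ∀ x y : V, μ (inclLBar K V x) (inclLBar K V y) = inclL K V (br x y)
  l_obar : ∀ x : V, μ (inclL K V x) (jBarOne K V) = inclLBar K V x
  obar_l : ∀ i : ZMod 2, ∀ x ∈ g i,
    μ (jBarOne K V) (inclL K V x) = sgn K i • inclLBar K V x
  obar_obar : μ (jBarOne K V) (jBarOne K V) = 0
  obar_lbar : ∀ x : V, μ (jBarOne K V) (inclLBar K V x) = 0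
  lbar_obar : ∀ x : V, μ (inclLBar K V x) (jBarOne K V) = 0

/-- An algebra `(V, μ)` is just infinite if it is infinite-dimensional and every
nonzero ideal has finite codimension. -/
def JustInfinite (μ : V →ₗ[K] V →ₗ[K] V) : Prop :=
  ¬ FiniteDimensional K V ∧
    ∀ I : Submodule K V, IsIdeal K μ I → I ≠ ⊥ → FiniteDimensional K (V ⧸ I)

end

/-! Both sides are linear in `gg`, and `Kan(P₁)` is spanned by the homogeneous elements `v`
and `v̄`, so it suffices to compare them there. For each of these the multiplication rules
of the two Kantor doubles and of `H ⊗ P₁` give the same pair of tensors on both sides: the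
signs match because `(-1)^{(|y|+|v|)+(|f|+1)|y|} = (-1)^{|f||y|+|v|}`, and for `v̄` the two
factors `(-1)^{|f|+1}` introduced by `D` cancel. -/

open TensorProduct

section Sign

variable {K : Type} [Field K]

theorem sgn_add (i j : ZMod 2) : sgn K (i + j) = sgn K i * sgn K j := by
  have zero_or_one : ∀ i : ZMod 2, i = 0 ∨ i = 1 := by decide
  rcases zero_or_one i with rfl | rfl <;> rcases zero_or_one j with rfl | rfl <;>
    simp +decide [sgn]

theorem sgn_mul_self (i : ZMod 2) : sgn K i * sgn K i = 1 := by
  rw [← sgn_add, CharTwo.add_self_eq_zero, sgn, if_pos rfl]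

theorem sgn_add_mul_sgn_add_one_mul (i j k : ZMod 2) :
    sgn K (j + k) * sgn K ((i + 1) * j) = sgn K (i * j) * sgn K k := by
  rw [add_mul, one_mul, sgn_add, sgn_add]
  linear_combination (sgn K k * sgn K (i * j)) * sgn_mul_self (K := K) j

end Sign

theorem LinearMap.prod_ext_of_iSup_eq_top {K V W ι : Type} [Field K] [AddCommGroup V]
    [Module K V] [AddCommGroup W] [Module K W] {g : ι → Submodule K V} (hg : ⨆ i, g i = ⊤)
    {L R : V × V →ₗ[K] W} (hl : ∀ i, ∀ v ∈ g i, L (v, 0) = R (v, 0))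
    (hr : ∀ i, ∀ v ∈ g i, L (0, v) = R (0, v)) : L = R := by
  have ext_of_homogeneous (L' R' : V →ₗ[K] W) (h : ∀ i, ∀ v ∈ g i, L' v = R' v) :
      L' = R' :=
    LinearMap.ext fun v => (iSup_le fun i v hv => h i v hv : ⨆ i, g i ≤ L'.eqLocus R')
      (hg ▸ Submodule.mem_top)
  exact LinearMap.prod_ext (ext_of_homogeneous _ _ hl) (ext_of_homogeneous _ _ hr)

namespace KantorRules

variable {K : Type} [Field K] {V : Type} [AddCommGroup V] [Module K V]
  {g : ZMod 2 → Submodule K V} {m p : V →ₗ[K] V →ₗ[K] V}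
  {μ : V × V →ₗ[K] V × V →ₗ[K] V × V}

theorem mul_mk_zero (h : KantorRules K g m p μ) (a b : V) {j : ZMod 2} {c : V} (hc : c ∈ g j) :
    μ (a, b) (c, 0) = (m a c, sgn K j • m b c) := by
  rw [show (a, b) = (a, 0) + (0, b) by simp, map_add, LinearMap.add_apply,
    h.plain_plain, h.bar_plain b j c hc, Prod.mk_add_mk, add_zero, zero_add]

theorem mul_zero_mk (h : KantorRules K g m p μ) (a b : V) {j : ZMod 2} {c : V} (hc : c ∈ g j) :
    μ (a, b) (0, c) = (sgn K j • p b c, m a c) := by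
  rw [show (a, b) = (a, 0) + (0, b) by simp, map_add, LinearMap.add_apply,
    h.plain_bar, h.bar_bar b j c hc, Prod.mk_add_mk, add_zero, zero_add]

end KantorRules

def tensorGrading {K A B : Type} [Field K] [AddCommGroup A] [Module K A] [AddCommGroup B]
    [Module K B] (gA : ZMod 2 → Submodule K A) (gB : ZMod 2 → Submodule K B) :
    ZMod 2 → Submodule K (A ⊗[K] B) :=
  fun i => ⨆ j, Submodule.map₂ (TensorProduct.mk K A B) (gA j) (gB (i - j))

theorem tmul_mem_tensorGrading {K A B : Type} [Field K] [AddCommGroup A] [Module K A]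
    [AddCommGroup B] [Module K B] {gA : ZMod 2 → Submodule K A} {gB : ZMod 2 → Submodule K B}
    {i j : ZMod 2} {a : A} {b : B} (ha : a ∈ gA i) (hb : b ∈ gB j) :
    a ⊗ₜ[K] b ∈ tensorGrading gA gB (i + j) :=
  le_iSup (fun k => Submodule.map₂ (TensorProduct.mk K A B) (gA k) (gB (i + j - k))) i
    (Submodule.apply_mem_map₂ _ ha (by simpa using hb))

section TensorKantor

variable {K : Type} [Field K] {H P : Type} [AddCommGroup H] [Module K H] [AddCommGroup P]
  [Module K P] {gH : ZMod 2 → Submodule K H} {g1 : ZMod 2 → Submodule K P}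
  {mH pH : H →ₗ[K] H →ₗ[K] H} {m1 p1 : P →ₗ[K] P →ₗ[K] P}
  {μ1 : P × P →ₗ[K] P × P →ₗ[K] P × P}
  {mT pT : H ⊗[K] P →ₗ[K] H ⊗[K] P →ₗ[K] H ⊗[K] P}
  {μT : (H ⊗[K] P) × (H ⊗[K] P) →ₗ[K] (H ⊗[K] P) × (H ⊗[K] P)
    →ₗ[K] (H ⊗[K] P) × (H ⊗[K] P)}
  {jf jy jg : ZMod 2} {x y : H} {f : P × P} {v : P}

theorem mul_prodRight_tmul_mk_zero (hμ1 : KantorRules K g1 m1 p1 μ1)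
    (hμT : KantorRules K (tensorGrading gH g1) mT pT μT)
    (hmT : ∀ (jv jb : ZMod 2), ∀ a : H, ∀ v ∈ g1 jv, ∀ b ∈ gH jb, ∀ w : P,
      mT (a ⊗ₜ[K] v) (b ⊗ₜ[K] w) = sgn K (jv * jb) • (mH a b ⊗ₜ[K] m1 v w))
    (hf : f ∈ kanGrading K g1 jf) (hy : y ∈ gH jy) (hv : v ∈ g1 jg) :
    μT (prodRight K K H P P (x ⊗ₜ[K] f)) (prodRight K K H P P (y ⊗ₜ[K] (v, 0)))
      = prodRight K K H P P (sgn K (jf * jy) • (mH x y ⊗ₜ[K] μ1 f (v, 0))) := by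
  obtain ⟨f1, f2⟩ := f
  obtain ⟨hf1, hf2⟩ := hf
  rw [prodRight_tmul, prodRight_tmul, tmul_zero,
    hμT.mul_mk_zero _ _ (tmul_mem_tensorGrading hy hv), hμ1.mul_mk_zero _ _ hv,
    hmT _ _ _ _ hf1 _ hy, hmT _ _ _ _ hf2 _ hy, smul_smul, sgn_add_mul_sgn_add_one_mul]
  simp only [map_smul, prodRight_tmul, tmul_smul, Prod.smul_mk, smul_smul]

theorem mul_prodRight_tmul_zero_mk (hμ1 : KantorRules K g1 m1 p1 μ1)
    (hμT : KantorRules K (tensorGrading gH g1) mT pT μT)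
    (hmT : ∀ (jv jb : ZMod 2), ∀ a : H, ∀ v ∈ g1 jv, ∀ b ∈ gH jb, ∀ w : P,
      mT (a ⊗ₜ[K] v) (b ⊗ₜ[K] w) = sgn K (jv * jb) • (mH a b ⊗ₜ[K] m1 v w))
    (hpT : ∀ (jv jb : ZMod 2), ∀ a : H, ∀ v ∈ g1 jv, ∀ b ∈ gH jb, ∀ w : P,
      pT (a ⊗ₜ[K] v) (b ⊗ₜ[K] w)
        = sgn K (jv * jb) • (pH a b ⊗ₜ[K] m1 v w + mH a b ⊗ₜ[K] p1 v w))
    {D : P × P →ₗ[K] P × P} (hD_plain : ∀ a : P, D (a, 0) = 0)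
    (hD_bar : ∀ i : ZMod 2, ∀ a ∈ g1 i, D (0, a) = (sgn K i • a, 0))
    (hf : f ∈ kanGrading K g1 jf) (hy : y ∈ gH jy) (hv : v ∈ g1 jg) :
    μT (prodRight K K H P P (x ⊗ₜ[K] f)) (prodRight K K H P P (y ⊗ₜ[K] (0, v)))
      = prodRight K K H P P (sgn K (jf * jy) • (mH x y ⊗ₜ[K] μ1 f (0, v))
          + (sgn K (jf * jy) * sgn K (jf + 1)) • (pH x y ⊗ₜ[K] μ1 (D f) (D (0, v)))) := by
  obtain ⟨f1, f2⟩ := f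
  obtain ⟨hf1, hf2⟩ := hf
  have hDf : D (f1, f2) = (sgn K (jf + 1) • f2, 0) := by
    rw [show (f1, f2) = (f1, 0) + (0, f2) by simp, map_add, hD_plain, hD_bar _ _ hf2, zero_add]
  rw [prodRight_tmul, prodRight_tmul, tmul_zero,
    hμT.mul_zero_mk _ _ (tmul_mem_tensorGrading hy hv), hμ1.mul_zero_mk _ _ hv,
    hmT _ _ _ _ hf1 _ hy, hpT _ _ _ _ hf2 _ hy, smul_smul, sgn_add_mul_sgn_add_one_mul,
    hDf, hD_bar _ _ hv, hμ1.plain_plain]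
  have sign_cancel : sgn K (jf * jy) * sgn K (jf + 1) * sgn K jg * sgn K (jf + 1)
      = sgn K (jf * jy) * sgn K jg := by
    linear_combination (sgn K (jf * jy) * sgn K jg) * sgn_mul_self (K := K) (jf + 1)
  simp only [map_smul, map_add, LinearMap.smul_apply, prodRight_tmul, tmul_smul, tmul_zero,
    Prod.smul_mk, smul_smul, smul_zero, smul_add, Prod.mk_add_mk, add_zero]
  rw [← mul_assoc, sign_cancel, add_comm]

end TensorKantor

open TensorProduct in
theorem kantor_double_of_tensor_poisson_general
    (K : Type) [Field K]
    {H : Type} [AddCommGroup H] [Module K H]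
    {P₁ : Type} [AddCommGroup P₁] [Module K P₁]
    (gH : ZMod 2 → Submodule K H) (mH pH : H →ₗ[K] H →ₗ[K] H)
    (g1 : ZMod 2 → Submodule K P₁) (m1 p1 : P₁ →ₗ[K] P₁ →ₗ[K] P₁) (e1 : P₁)
    (hP1 : IsPoissonSuper K g1 m1 p1 e1)
    -- the Kantor double `J₁ = Kan(P₁)` with Jordan product `μ1`
    (μ1 : P₁ × P₁ →ₗ[K] P₁ × P₁ →ₗ[K] P₁ × P₁)
    (hμ1 : KantorRules K g1 m1 p1 μ1)
    -- the canonical odd superderivation `D` of `J₁`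
    (D : P₁ × P₁ →ₗ[K] P₁ × P₁)
    (hD_plain : ∀ a : P₁, D (a, 0) = 0)
    (hD_bar : ∀ i : ZMod 2, ∀ a ∈ g1 i, D (0, a) = (sgn K i • a, 0))
    -- the tensor product Poisson superalgebra `T = H ⊗ P₁`
    (mT pT : H ⊗[K] P₁ →ₗ[K] H ⊗[K] P₁ →ₗ[K] H ⊗[K] P₁)
    (hmT : ∀ (jv jb : ZMod 2), ∀ a : H, ∀ v ∈ g1 jv, ∀ b ∈ gH jb, ∀ w : P₁,
      mT (a ⊗ₜ[K] v) (b ⊗ₜ[K] w) = sgn K (jv * jb) • (mH a b ⊗ₜ[K] m1 v w))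
    (hpT : ∀ (jv jb : ZMod 2), ∀ a : H, ∀ v ∈ g1 jv, ∀ b ∈ gH jb, ∀ w : P₁,
      pT (a ⊗ₜ[K] v) (b ⊗ₜ[K] w)
        = sgn K (jv * jb) • (pH a b ⊗ₜ[K] m1 v w + mH a b ⊗ₜ[K] p1 v w))
    -- the Kantor double `Kan(H ⊗ P₁)` with Kantor product `μT`
    (μT : (H ⊗[K] P₁) × (H ⊗[K] P₁) →ₗ[K] (H ⊗[K] P₁) × (H ⊗[K] P₁)
            →ₗ[K] (H ⊗[K] P₁) × (H ⊗[K] P₁))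
    (hμT : KantorRules K
      (fun i => ⨆ j : ZMod 2,
        Submodule.map₂ (TensorProduct.mk K H P₁) (gH j) (g1 (i - j)))
      mT pT μT) :
    ∀ (jf jy : ZMod 2), ∀ x : H, ∀ f ∈ kanGrading K g1 jf, ∀ y ∈ gH jy,
      ∀ gg : P₁ × P₁,
        μT ((TensorProduct.prodRight K K H P₁ P₁) (x ⊗ₜ[K] f))
            ((TensorProduct.prodRight K K H P₁ P₁) (y ⊗ₜ[K] gg))
          = (TensorProduct.prodRight K K H P₁ P₁)
              (sgn K (jf * jy) • (mH x y ⊗ₜ[K] μ1 f gg)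
                + (sgn K (jf * jy) * sgn K (jf + 1))
                    • (pH x y ⊗ₜ[K] μ1 (D f) (D gg))) := by
  intro jf jy x f hf y hy gg
  suffices μT (prodRight K K H P₁ P₁ (x ⊗ₜ f)) ∘ₗ
        (prodRight K K H P₁ P₁).toLinearMap ∘ₗ mk K H (P₁ × P₁) y
      = (prodRight K K H P₁ P₁).toLinearMap ∘ₗ
          (sgn K (jf * jy) • (mk K H (P₁ × P₁) (mH x y) ∘ₗ μ1 f)
            + (sgn K (jf * jy) * sgn K (jf + 1)) •
                (mk K H (P₁ × P₁) (pH x y) ∘ₗ μ1 (D f) ∘ₗ D))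
    from LinearMap.congr_fun this gg
  refine LinearMap.prod_ext_of_iSup_eq_top hP1.internal.submodule_iSup_eq_top
    (fun jg v hv => ?_) (fun jg v hv => ?_)
  · refine (mul_prodRight_tmul_mk_zero hμ1 hμT hmT hf hy hv).trans ?_
    simp [hD_plain]
  · exact mul_prodRight_tmul_zero_mk hμ1 hμT hmT hpT hD_plain hD_bar hf hy hv

open TensorProduct in
/-- Let `H` be a Poisson superalgebra and `P₁` a Poisson
superalgebra with Kantor double `J₁ = Kan(P₁)`.  Under the vector space
isomorphism `Kan(H ⊗ P₁) ≅ H ⊗ J₁` (given by `TensorProduct.prodRight`), the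
Kantor product of `Kan(H ⊗ P₁)` takes the form
`(x⊗f)•(y⊗g) = (-1)^{|f||y|}( x·y ⊗ f∘g + (-1)^{|f|+1} {x,y} ⊗ D(f)∘D(g) )`,
where `∘` is the Jordan product of `J₁` and `D` is the canonical odd
superderivation of `J₁`. -/
theorem kantor_double_of_tensor_poisson
    (K : Type) [Field K] (hchar : (2 : K) ≠ 0)
    {H : Type} [AddCommGroup H] [Module K H]
    {P₁ : Type} [AddCommGroup P₁] [Module K P₁]
    (gH : ZMod 2 → Submodule K H) (mH pH : H →ₗ[K] H →ₗ[K] H) (eH : H)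
    (hH : IsPoissonSuper K gH mH pH eH)
    (g1 : ZMod 2 → Submodule K P₁) (m1 p1 : P₁ →ₗ[K] P₁ →ₗ[K] P₁) (e1 : P₁)
    (hP1 : IsPoissonSuper K g1 m1 p1 e1)
    -- the Kantor double `J₁ = Kan(P₁)` with Jordan product `μ1`
    (μ1 : P₁ × P₁ →ₗ[K] P₁ × P₁ →ₗ[K] P₁ × P₁)
    (hμ1 : KantorRules K g1 m1 p1 μ1)
    -- the canonical odd superderivation `D` of `J₁`
    (D : P₁ × P₁ →ₗ[K] P₁ × P₁)
    (hD_plain : ∀ a : P₁, D (a, 0) = 0)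
    (hD_bar : ∀ i : ZMod 2, ∀ a ∈ g1 i, D (0, a) = (sgn K i • a, 0))
    -- the tensor product Poisson superalgebra `T = H ⊗ P₁`
    (mT pT : H ⊗[K] P₁ →ₗ[K] H ⊗[K] P₁ →ₗ[K] H ⊗[K] P₁)
    (hmT : ∀ (jv jb : ZMod 2), ∀ a : H, ∀ v ∈ g1 jv, ∀ b ∈ gH jb, ∀ w : P₁,
      mT (a ⊗ₜ[K] v) (b ⊗ₜ[K] w) = sgn K (jv * jb) • (mH a b ⊗ₜ[K] m1 v w))
    (hpT : ∀ (jv jb : ZMod 2), ∀ a : H, ∀ v ∈ g1 jv, ∀ b ∈ gH jb, ∀ w : P₁,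
      pT (a ⊗ₜ[K] v) (b ⊗ₜ[K] w)
        = sgn K (jv * jb) • (pH a b ⊗ₜ[K] m1 v w + mH a b ⊗ₜ[K] p1 v w))
    -- the Kantor double `Kan(H ⊗ P₁)` with Kantor product `μT`
    (μT : (H ⊗[K] P₁) × (H ⊗[K] P₁) →ₗ[K] (H ⊗[K] P₁) × (H ⊗[K] P₁)
            →ₗ[K] (H ⊗[K] P₁) × (H ⊗[K] P₁))
    (hμT : KantorRules K
      (fun i => ⨆ j : ZMod 2,
        Submodule.map₂ (TensorProduct.mk K H P₁) (gH j) (g1 (i - j)))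
      mT pT μT) :
    ∀ (jf jy : ZMod 2), ∀ x : H, ∀ f ∈ kanGrading K g1 jf, ∀ y ∈ gH jy,
      ∀ gg : P₁ × P₁,
        μT ((TensorProduct.prodRight K K H P₁ P₁) (x ⊗ₜ[K] f))
            ((TensorProduct.prodRight K K H P₁ P₁) (y ⊗ₜ[K] gg))
          = (TensorProduct.prodRight K K H P₁ P₁)
              (sgn K (jf * jy) • (mH x y ⊗ₜ[K] μ1 f gg)
                + (sgn K (jf * jy) * sgn K (jf + 1))
                    • (pH x y ⊗ₜ[K] μ1 (D f) (D gg))) :=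
  kantor_double_of_tensor_poisson_general K gH mH pH g1 m1 p1 e1 hP1 μ1 hμ1 D hD_plain hD_bar mT pT
    hmT hpT μT hμT
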